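/- arXiv:1802.08887 — 2 statements merged into one kernel-verified Lean document; each statement's English description precedes it below -/
import Mathlib

section
/- For any reporting strategies ŝ_A : Σ_A → Δ_Σ and ŝ_B : Σ_B → Δ_Σ, the expected payment satisfies Pay(ŝ_A, ŝ_B) = MI^f(X_A;X_B) if and only if f'(g(x_A,x_B)) = f'(K(x_A,x_B)) for every pair (x_A,x_B); in particular, when f' is injective, Pay(ŝ_A, ŝ_B) = MI^f(X_A;X_B) if and only if Σ_y ŝ_A(x_A)(y)·ŝ_B(x_B)(y)/Pr[Y=y] = K(x_A,x_B) for every pair (x_A,x_B). -/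
/-!
By the conjugate identity `f*(f'(t)) = t·f'(t) - f(t)`, the difference `MI^f - Pay` equals
`Σ Pr[a]·Pr[b]·D_f(K(a,b), g(a,b))`, where `D_f(p,q) = f(p) - f(q) - f'(q)·(p - q)` is the
Bregman divergence of `f`. Convexity makes every `D_f(p,q)` nonnegative, and since
`D_f(p,q) + D_f(q,p) = (f'(p) - f'(q))·(p - q)` it vanishes exactly when `f'(p) = f'(q)`.
The weights are positive, so the sum vanishes iff every term does.
-/

noncomputable section

variable {SA SB S : Type*}

/-- Joint probability `Pr[X_A = a, X_B = b]` induced by the joint pmf `ν` of `(X_A, X_B, Y)`. -/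
def jAB [Fintype S] (ν : SA → SB → S → ℝ) (a : SA) (b : SB) : ℝ := ∑ y, ν a b y

/-- Joint probability `Pr[X_A = a, Y = y]`. -/
def jAY [Fintype SB] (ν : SA → SB → S → ℝ) (a : SA) (y : S) : ℝ := ∑ b, ν a b y

/-- Joint probability `Pr[X_B = b, Y = y]`. -/
def jBY [Fintype SA] (ν : SA → SB → S → ℝ) (b : SB) (y : S) : ℝ := ∑ a, ν a b y

/-- Marginal probability `Pr[X_A = a]`. -/
def prA [Fintype SB] [Fintype S] (ν : SA → SB → S → ℝ) (a : SA) : ℝ := ∑ b, ∑ y, ν a b y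

/-- Marginal probability `Pr[X_B = b]`. -/
def prB [Fintype SA] [Fintype S] (ν : SA → SB → S → ℝ) (b : SB) : ℝ := ∑ a, ∑ y, ν a b y

/-- Marginal probability `Pr[Y = y]`. -/
def prY [Fintype SA] [Fintype SB] (ν : SA → SB → S → ℝ) (y : S) : ℝ := ∑ a, ∑ b, ν a b y

/-- Pointwise mutual information `K(a,b) = Pr[a,b]/(Pr[a]·Pr[b])`. -/
def K [Fintype SA] [Fintype SB] [Fintype S] (ν : SA → SB → S → ℝ) (a : SA) (b : SB) : ℝ :=
  jAB ν a b / (prA ν a * prB ν b)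

/-- Conditional probability `Pr[Y = y | X_A = a]`. -/
def condA [Fintype SB] [Fintype S] (ν : SA → SB → S → ℝ) (a : SA) (y : S) : ℝ :=
  jAY ν a y / prA ν a

/-- Conditional probability `Pr[Y = y | X_B = b]`. -/
def condB [Fintype SA] [Fintype S] (ν : SA → SB → S → ℝ) (b : SB) (y : S) : ℝ :=
  jBY ν b y / prB ν b

/-- `X_A` and `X_B` are conditionally independent given `Y`:
`Pr[a, b | y] = Pr[a | y] · Pr[b | y]` for all `a, b, y`. -/
def CondIndep [Fintype SA] [Fintype SB] (ν : SA → SB → S → ℝ) : Prop :=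
  ∀ a b y, ν a b y / prY ν y = (jAY ν a y / prY ν y) * (jBY ν b y / prY ν y)

/-- `ν` is a probability mass function. -/
def IsPMF [Fintype SA] [Fintype SB] [Fintype S] (ν : SA → SB → S → ℝ) : Prop :=
  (∀ a b y, 0 ≤ ν a b y) ∧ ∑ a, ∑ b, ∑ y, ν a b y = 1

/-- `p` is a probability vector: nonnegative entries summing to `1`. -/
def IsProbVec {T : Type*} [Fintype T] (p : T → ℝ) : Prop := (∀ t, 0 ≤ p t) ∧ ∑ t, p t = 1

/-- The convex conjugate `f*(x) = sup_t (t·x − f(t))`, as a real-valued supremum. -/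
def fconj (f : ℝ → ℝ) (x : ℝ) : ℝ := sSup (Set.range fun t => t * x - f t)

/-- `c` is a subgradient of `f` at `t`: `f(s) ≥ f(t) + c·(s − t)` for all `s`. -/
def IsSubgradientAt (f : ℝ → ℝ) (t c : ℝ) : Prop := ∀ s : ℝ, f t + c * (s - t) ≤ f s

/-- The f-mutual information `MI^f(X_A;X_B) = Σ_{a,b} Pr[a]·Pr[b]·f(K(a,b))`. -/
def MIf [Fintype SA] [Fintype SB] [Fintype S] (f : ℝ → ℝ) (ν : SA → SB → S → ℝ) : ℝ :=
  ∑ a, ∑ b, prA ν a * prB ν b * f (K ν a b)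

/-- The agreement `g(a,b) = Σ_y h_A(a)(y)·h_B(b)(y)/p(y)`. -/
def gagr [Fintype S] (hA : SA → S → ℝ) (hB : SB → S → ℝ) (p : S → ℝ) (a : SA) (b : SB) : ℝ :=
  ∑ y, hA a y * hB b y / p y

/-- Expected `f`-mutual information gain
`MIG^f(h_A,h_B,p) = Σ Pr[a,b]·f'(g(a,b)) − Σ Pr[a]·Pr[b]·f*(f'(g(a,b)))`. -/
def MIG [Fintype SA] [Fintype SB] [Fintype S] (f : ℝ → ℝ) (ν : SA → SB → S → ℝ)
    (hA : SA → S → ℝ) (hB : SB → S → ℝ) (p : S → ℝ) : ℝ :=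
  ∑ a, ∑ b, jAB ν a b * deriv f (gagr hA hB p a b)
    - ∑ a, ∑ b, prA ν a * prB ν b * fconj f (deriv f (gagr hA hB p a b))

/-- Each agent's expected payment in the multi-task common ground mechanism `MCG(f)`. -/
def Pay [Fintype SA] [Fintype SB] [Fintype S] (f : ℝ → ℝ) (ν : SA → SB → S → ℝ)
    (sA : SA → S → ℝ) (sB : SB → S → ℝ) : ℝ :=
  MIG f ν sA sB (prY ν)

/-- `({a^{x_A}}, {b^{x_B}}, r)` is a solution of the agreement system:
probability vectors, `r` strictly positive, with
`Σ_y a^{x_A}(y)·b^{x_B}(y)/r(y) = K(x_A,x_B)` for all `x_A, x_B`. -/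
def AgreementSolution [Fintype SA] [Fintype SB] [Fintype S] (ν : SA → SB → S → ℝ)
    (a : SA → S → ℝ) (b : SB → S → ℝ) (r : S → ℝ) : Prop :=
  (∀ xa, IsProbVec (a xa)) ∧ (∀ xb, IsProbVec (b xb)) ∧ IsProbVec r ∧ (∀ y, 0 < r y) ∧
    ∀ xa xb, (∑ y, a xa y * b xb y / r y) = K ν xa xb

/-- The prior is well-defined: any two solutions of the agreement system coincide
up to a permutation of `Σ`. -/
def WellDefinedPrior [Fintype SA] [Fintype SB] [Fintype S] (ν : SA → SB → S → ℝ) : Prop :=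
  ∀ (a : SA → S → ℝ) (b : SB → S → ℝ) (r : S → ℝ)
    (c : SA → S → ℝ) (d : SB → S → ℝ) (r' : S → ℝ),
    AgreementSolution ν a b r → AgreementSolution ν c d r' →
    ∃ π : Equiv.Perm S, ∀ y, r (π y) = r' y ∧ (∀ xa, a xa (π y) = c xa y)
      ∧ (∀ xb, b xb (π y) = d xb y)

/-- The prior is stable: fixing the truthful `A`-side (resp. `B`-side) of the agreement
system, the only solution for the other side is the truthful one. -/
def StablePrior [Fintype SA] [Fintype SB] [Fintype S] (ν : SA → SB → S → ℝ) : Prop :=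
  (∀ b : SB → S → ℝ, (∀ xb, IsProbVec (b xb)) →
    (∀ xa xb, (∑ y, condA ν xa y * b xb y / prY ν y) = K ν xa xb) →
    ∀ xb y, b xb y = condB ν xb y) ∧
  (∀ a : SA → S → ℝ, (∀ xa, IsProbVec (a xa)) →
    (∀ xa xb, (∑ y, a xa y * condB ν xb y / prY ν y) = K ν xa xb) →
    ∀ xa y, a xa y = condA ν xa y)


open Finset

def bregmanDiv (f : ℝ → ℝ) (p q : ℝ) : ℝ := f p - f q - deriv f q * (p - q)

theorem bregmanDiv_add_bregmanDiv (f : ℝ → ℝ) (p q : ℝ) :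
    bregmanDiv f p q + bregmanDiv f q p = (deriv f p - deriv f q) * (p - q) := by
  unfold bregmanDiv
  ring

theorem ConvexOn.bregmanDiv_nonneg {s : Set ℝ} {f : ℝ → ℝ} (hf : ConvexOn ℝ s f) {p q : ℝ}
    (hp : p ∈ s) (hq : q ∈ s) (hfq : DifferentiableAt ℝ f q) : 0 ≤ bregmanDiv f p q := by
  unfold bregmanDiv
  rcases lt_trichotomy q p with hqp | rfl | hpq
  · have h := hf.deriv_le_slope hq hp hqp hfq
    rw [slope_def_field, le_div_iff₀ (sub_pos.mpr hqp)] at h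
    linarith
  · simp
  · have h := hf.slope_le_deriv hp hq hpq hfq
    rw [slope_def_field, div_le_iff₀ (sub_pos.mpr hpq)] at h
    linarith

theorem ConvexOn.bregmanDiv_eq_zero_iff {f : ℝ → ℝ} (hf : ConvexOn ℝ Set.univ f) {p q : ℝ}
    (hfp : DifferentiableAt ℝ f p) (hfq : DifferentiableAt ℝ f q) :
    bregmanDiv f p q = 0 ↔ deriv f p = deriv f q := by
  constructor
  · intro h
    have hmin : IsLocalMin (bregmanDiv f · q) p :=
      .of_forall fun t => h.le.trans <| hf.bregmanDiv_nonneg (Set.mem_univ t) (Set.mem_univ q) hfq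
    have hderiv : HasDerivAt (bregmanDiv f · q) (deriv f p - 0 - deriv f q * (1 - 0)) p :=
      ((hfp.hasDerivAt.sub (hasDerivAt_const p (f q))).sub
        (((hasDerivAt_id p).sub (hasDerivAt_const p q)).const_mul (deriv f q)))
    linarith [hmin.hasDerivAt_eq_zero hderiv]
  · intro h
    have hsum := bregmanDiv_add_bregmanDiv f p q
    rw [h, sub_self, zero_mul] at hsum
    have hpq := hf.bregmanDiv_nonneg (Set.mem_univ p) (Set.mem_univ q) hfq
    have hqp := hf.bregmanDiv_nonneg (Set.mem_univ q) (Set.mem_univ p) hfp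
    linarith

theorem sum_sum_mul_eq_zero_iff {ι κ : Type*} [Fintype ι] [Fintype κ] {w D : ι → κ → ℝ}
    (hw : ∀ i j, 0 < w i j) (hD : ∀ i j, 0 ≤ D i j) :
    ∑ i, ∑ j, w i j * D i j = 0 ↔ ∀ i j, D i j = 0 := by
  have hterm : ∀ i j, 0 ≤ w i j * D i j := fun i j => mul_nonneg (hw i j).le (hD i j)
  rw [sum_eq_zero_iff_of_nonneg fun i _ => sum_nonneg fun j _ => hterm i j]
  simp_rw [sum_eq_zero_iff_of_nonneg fun j _ => hterm _ j, mul_eq_zero, (hw _ _).ne',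
    false_or, mem_univ, true_imp_iff]

section MutualInformation

variable [Fintype SA] [Fintype SB] [Fintype S]

theorem jAB_eq_mul_K {ν : SA → SB → S → ℝ} {a : SA} {b : SB} (ha : prA ν a ≠ 0)
    (hb : prB ν b ≠ 0) : jAB ν a b = prA ν a * prB ν b * K ν a b :=
  (mul_div_cancel₀ _ (mul_ne_zero ha hb)).symm

theorem MIf_sub_MIG {f : ℝ → ℝ} (hconj : ∀ t, fconj f (deriv f t) = t * deriv f t - f t)
    {ν : SA → SB → S → ℝ} (hA : ∀ a, prA ν a ≠ 0) (hB : ∀ b, prB ν b ≠ 0)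
    (sA : SA → S → ℝ) (sB : SB → S → ℝ) (p : S → ℝ) :
    MIf f ν - MIG f ν sA sB p =
      ∑ a, ∑ b, prA ν a * prB ν b * bregmanDiv f (K ν a b) (gagr sA sB p a b) := by
  simp only [MIf, MIG, bregmanDiv, hconj, jAB_eq_mul_K (hA _) (hB _), ← sum_sub_distrib,
    sub_sub_eq_add_sub]
  refine sum_congr rfl fun a _ => sum_congr rfl fun b _ => ?_
  ring

end MutualInformation

theorem stmt_7_general [Fintype SA] [Fintype SB] [Fintype S]
    (ν : SA → SB → S → ℝ)
    (hA : ∀ a, 0 < prA ν a) (hB : ∀ b, 0 < prB ν b)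
    (f : ℝ → ℝ) (hconv : ConvexOn ℝ Set.univ f) (hdiff : Differentiable ℝ f)
    (hconj : ∀ t : ℝ, fconj f (deriv f t) = t * deriv f t - f t)
    (sA : SA → S → ℝ) (sB : SB → S → ℝ) :
    (Pay f ν sA sB = MIf f ν
      ↔ ∀ a b, deriv f (gagr sA sB (prY ν) a b) = deriv f (K ν a b))
    ∧ (Function.Injective (deriv f) →
        (Pay f ν sA sB = MIf f ν ↔ ∀ a b, gagr sA sB (prY ν) a b = K ν a b)) := by
  have hmain : Pay f ν sA sB = MIf f ν ↔
      ∀ a b, deriv f (gagr sA sB (prY ν) a b) = deriv f (K ν a b) := by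
    rw [eq_comm, ← sub_eq_zero, Pay,
      MIf_sub_MIG hconj (fun a => (hA a).ne') (fun b => (hB b).ne'),
      sum_sum_mul_eq_zero_iff (fun a b => mul_pos (hA a) (hB b))
        (fun a b => hconv.bregmanDiv_nonneg (Set.mem_univ _) (Set.mem_univ _) (hdiff _))]
    simp_rw [hconv.bregmanDiv_eq_zero_iff (hdiff _) (hdiff _), eq_comm]
  exact ⟨hmain, fun hinj => hmain.trans (forall₂_congr fun a b => hinj.eq_iff)⟩

/-- For any reporting strategies, the expected payment in `MCG(f)` equals
`MI^f(X_A;X_B)` iff `f'(g(a,b)) = f'(K(a,b))` for every pair `(a,b)`; in particular,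
when `f'` is injective, it equals `MI^f(X_A;X_B)` iff
`Σ_y ŝ_A(a)(y)·ŝ_B(b)(y)/Pr[Y=y] = K(a,b)` for every pair `(a,b)`. -/
theorem stmt_7 [Fintype SA] [Fintype SB] [Fintype S] [Nonempty SA] [Nonempty SB] [Nonempty S]
    (ν : SA → SB → S → ℝ) (hν : IsPMF ν)
    (hA : ∀ a, 0 < prA ν a) (hB : ∀ b, 0 < prB ν b) (hY : ∀ y, 0 < prY ν y)
    (f : ℝ → ℝ) (hconv : ConvexOn ℝ Set.univ f) (hdiff : Differentiable ℝ f) (hf1 : f 1 = 0)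
    (hconj : ∀ t : ℝ, fconj f (deriv f t) = t * deriv f t - f t)
    (sA : SA → S → ℝ) (sB : SB → S → ℝ)
    (hsA : ∀ a, IsProbVec (sA a)) (hsB : ∀ b, IsProbVec (sB b)) :
    (Pay f ν sA sB = MIf f ν
      ↔ ∀ a b, deriv f (gagr sA sB (prY ν) a b) = deriv f (K ν a b))
    ∧ (Function.Injective (deriv f) →
        (Pay f ν sA sB = MIf f ν ↔ ∀ a b, gagr sA sB (prY ν) a b = K ν a b)) :=
  stmt_7_general ν hA hB f hconv hdiff hconj sA sB
end
end

section
/- Assume X_A and X_B are conditionally independent given Y and that Pr[Y=y|X_B=x_B] > 0 for all x_B, y. Then for every reporting strategy ŝ : Σ_A → Δ_Σ, one has Σ_{x_A,x_B} Pr[X_A=x_A, X_B=x_B]·log(Σ_y ŝ(x_A)(y)·Pr[Y=y|X_B=x_B]/Pr[Y=y]) ≤ I(X_A;X_B), where I(X_A;X_B) = Σ_{x_A,x_B} Pr[X_A=x_A, X_B=x_B]·log(Pr[X_A=x_A, X_B=x_B]/(Pr[X_A=x_A]·Pr[X_B=x_B])). That is, given that Bob reports truthfully, Alice's expected payment in the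 common ground mechanism is at most the Shannon mutual information, which she attains by truthful reporting. -/
noncomputable section

variable {SA SB S : Type*}

/-! Alice's score `log g(a,b)` against Bob's truthful posterior satisfies
`Σ_b Pr[b] · g(a,b) = Σ_y ŝ(a)(y) = 1`, so `Σ_{a,b} Pr[a,b] · g(a,b) / K(a,b) = 1`, and
Gibbs' inequality (`log t ≤ t - 1` applied to `t = g / K`) gives
`Σ Pr[a,b] log g ≤ Σ Pr[a,b] log K = I(X_A;X_B)`. Under conditional independence the
truthful report makes `g = K` on the nose. -/

open Finset

theorem Finset.sum_mul_log_le_sum_mul_log {ι : Type*} (s : Finset ι) {w x y : ι → ℝ}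
    (hw : ∀ i ∈ s, 0 ≤ w i) (hx : ∀ i ∈ s, 0 < x i) (hy : ∀ i ∈ s, 0 < y i)
    (hsum : ∑ i ∈ s, w i * (x i / y i) ≤ ∑ i ∈ s, w i) :
    ∑ i ∈ s, w i * Real.log (x i) ≤ ∑ i ∈ s, w i * Real.log (y i) := by
  have hterm : ∀ i ∈ s,
      w i * Real.log (x i) - w i * Real.log (y i) ≤ w i * (x i / y i) - w i := by
    intro i hi
    have hlog := Real.log_le_sub_one_of_pos (div_pos (hx i hi) (hy i hi))
    rw [Real.log_div (hx i hi).ne' (hy i hi).ne'] at hlog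
    nlinarith [mul_le_mul_of_nonneg_left hlog (hw i hi)]
  have := sum_le_sum hterm
  rw [sum_sub_distrib, sum_sub_distrib] at this
  linarith

theorem gagr_pos [Fintype S] {hA : SA → S → ℝ} {hB : SB → S → ℝ} {p : S → ℝ} {a : SA}
    {b : SB} (hA_prob : IsProbVec (hA a)) (hB_pos : ∀ y, 0 < hB b y) (hp : ∀ y, 0 < p y) :
    0 < gagr hA hB p a b := by
  obtain ⟨y₀, hy₀⟩ : ∃ y, 0 < hA a y := by
    by_contra! h
    have : ∑ y, hA a y = 0 := sum_eq_zero fun y _ => (h y).antisymm (hA_prob.1 y)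
    linarith [hA_prob.2]
  refine sum_pos' (fun y _ => ?_) ⟨y₀, mem_univ y₀, ?_⟩
  · exact div_nonneg (mul_nonneg (hA_prob.1 y) (hB_pos y).le) (hp y).le
  · exact div_pos (mul_pos hy₀ (hB_pos y₀)) (hp y₀)

section JointLaw

variable {ν : SA → SB → S → ℝ}

theorem IsPMF.sum_jAB [Fintype SA] [Fintype SB] [Fintype S] (hν : IsPMF ν) :
    ∑ a, ∑ b, jAB ν a b = 1 :=
  hν.2

theorem IsPMF.sum_prA [Fintype SA] [Fintype SB] [Fintype S] (hν : IsPMF ν) :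
    ∑ a, prA ν a = 1 :=
  hν.2

theorem prA_pos [Fintype SB] [Nonempty SB] [Fintype S] (hAB : ∀ a b, 0 < jAB ν a b) (a : SA) :
    0 < prA ν a :=
  sum_pos (fun b _ => hAB a b) univ_nonempty

theorem prB_pos [Fintype SA] [Nonempty SA] [Fintype S] (hAB : ∀ a b, 0 < jAB ν a b) (b : SB) :
    0 < prB ν b :=
  sum_pos (fun a _ => hAB a b) univ_nonempty

theorem K_pos [Fintype SA] [Nonempty SA] [Fintype SB] [Nonempty SB] [Fintype S]
    (hAB : ∀ a b, 0 < jAB ν a b) (a : SA) (b : SB) : 0 < K ν a b :=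
  div_pos (hAB a b) (mul_pos (prA_pos hAB a) (prB_pos hAB b))

theorem sum_prB_mul_condB [Fintype SA] [Fintype SB] [Fintype S] (hB : ∀ b, prB ν b ≠ 0)
    (y : S) : ∑ b, prB ν b * condB ν b y = prY ν y := by
  simp only [condB, mul_div_cancel₀ _ (hB _)]
  exact sum_comm

theorem sum_prB_mul_gagr_condB [Fintype SA] [Fintype SB] [Fintype S] (s : SA → S → ℝ)
    (hB : ∀ b, prB ν b ≠ 0) (hY : ∀ y, prY ν y ≠ 0) (a : SA) :
    ∑ b, prB ν b * gagr s (condB ν) (prY ν) a b = ∑ y, s a y := by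
  calc ∑ b, prB ν b * gagr s (condB ν) (prY ν) a b
      = ∑ y, s a y / prY ν y * ∑ b, prB ν b * condB ν b y := by
        simp only [gagr, mul_sum]
        rw [sum_comm]
        exact sum_congr rfl fun y _ => sum_congr rfl fun b _ => by ring
    _ = ∑ y, s a y := by
        simp only [sum_prB_mul_condB hB, div_mul_cancel₀ _ (hY _)]

theorem sum_jAB_mul_gagr_condB_div_K [Fintype SA] [Nonempty SA] [Fintype SB] [Nonempty SB]
    [Fintype S] (hν : IsPMF ν) (hAB : ∀ a b, 0 < jAB ν a b) (hY : ∀ y, prY ν y ≠ 0)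
    (s : SA → S → ℝ) (hs : ∀ a, ∑ y, s a y = 1) :
    ∑ a, ∑ b, jAB ν a b * (gagr s (condB ν) (prY ν) a b / K ν a b) = 1 := by
  have hjAB_div_K a b : jAB ν a b / K ν a b = prA ν a * prB ν b := by
    rw [K, div_div_cancel₀ (hAB a b).ne']
  calc _ = ∑ a, prA ν a * ∑ b, prB ν b * gagr s (condB ν) (prY ν) a b := by
        simp only [mul_div_left_comm _ (gagr _ _ _ _ _), hjAB_div_K, mul_sum]
        exact sum_congr rfl fun a _ => sum_congr rfl fun b _ => by ring
    _ = 1 := by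
        simp only [sum_prB_mul_gagr_condB s (fun b => (prB_pos hAB b).ne') hY, hs, mul_one,
          hν.sum_prA]

theorem CondIndep.eq_mul_div [Fintype SA] [Fintype SB] (hci : CondIndep ν) {y : S}
    (hy : prY ν y ≠ 0) (a : SA) (b : SB) : ν a b y = jAY ν a y * jBY ν b y / prY ν y := by
  have h := hci a b y
  field_simp at h
  field_simp
  linarith

theorem CondIndep.gagr_condA_condB [Fintype SA] [Fintype SB] [Fintype S] (hci : CondIndep ν)
    (hA : ∀ a, prA ν a ≠ 0) (hB : ∀ b, prB ν b ≠ 0) (hY : ∀ y, prY ν y ≠ 0) (a : SA) (b : SB) :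
    gagr (condA ν) (condB ν) (prY ν) a b = K ν a b := by
  have hterm y : condA ν a y * condB ν b y / prY ν y = ν a b y / (prA ν a * prB ν b) := by
    rw [condA, condB, hci.eq_mul_div (hY y)]
    field_simp [hY y, hA a, hB b]
  simp only [gagr, hterm, ← sum_div]
  rfl

end JointLaw

theorem stmt_12_general [Fintype SA] [Fintype SB] [Fintype S] [Nonempty SA] [Nonempty SB]
    (ν : SA → SB → S → ℝ) (hν : IsPMF ν)
    (hAB : ∀ a b, 0 < jAB ν a b) (hY : ∀ y, 0 < prY ν y)
    (hci : CondIndep ν) (hBY : ∀ b y, 0 < condB ν b y) :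
    (∀ s : SA → S → ℝ, (∀ a, IsProbVec (s a)) →
      ∑ a, ∑ b, jAB ν a b * Real.log (∑ y, s a y * condB ν b y / prY ν y)
        ≤ ∑ a, ∑ b, jAB ν a b * Real.log (jAB ν a b / (prA ν a * prB ν b)))
    ∧ ∑ a, ∑ b, jAB ν a b * Real.log (∑ y, condA ν a y * condB ν b y / prY ν y)
        = ∑ a, ∑ b, jAB ν a b * Real.log (jAB ν a b / (prA ν a * prB ν b)) := by
  have hY' y := (hY y).ne'
  refine ⟨fun s hs => ?_, ?_⟩
  · have hmass := sum_jAB_mul_gagr_condB_div_K hν hAB hY' s fun a => (hs a).2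
    rw [← hν.sum_jAB] at hmass
    simp only [← Fintype.sum_prod_type'] at hmass ⊢
    exact sum_mul_log_le_sum_mul_log univ (fun i _ => (hAB i.1 i.2).le)
      (fun i _ => gagr_pos (hs i.1) (hBY i.2) hY) (fun i _ => K_pos hAB i.1 i.2) hmass.le
  · have hA a := (prA_pos hAB a).ne'
    have hB b := (prB_pos hAB b).ne'
    exact sum_congr rfl fun a _ => sum_congr rfl fun b _ => by
      rw [← gagr, hci.gagr_condA_condB hA hB hY' a b, K]

/-- In the common ground mechanism with a truthful Bob, under conditional independence
(and positive posteriors `Pr[Y=y|X_B=b] > 0`), every reporting strategy of Alice earns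
expected payment at most the Shannon mutual information `I(X_A;X_B)`, which Alice
attains by truthful reporting. -/
theorem stmt_12 [Fintype SA] [Fintype SB] [Fintype S] [Nonempty SA] [Nonempty SB] [Nonempty S]
    (ν : SA → SB → S → ℝ) (hν : IsPMF ν)
    (hAB : ∀ a b, 0 < jAB ν a b) (hY : ∀ y, 0 < prY ν y)
    (hci : CondIndep ν) (hBY : ∀ b y, 0 < condB ν b y) :
    (∀ s : SA → S → ℝ, (∀ a, IsProbVec (s a)) →
      ∑ a, ∑ b, jAB ν a b * Real.log (∑ y, s a y * condB ν b y / prY ν y)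
        ≤ ∑ a, ∑ b, jAB ν a b * Real.log (jAB ν a b / (prA ν a * prB ν b)))
    ∧ ∑ a, ∑ b, jAB ν a b * Real.log (∑ y, condA ν a y * condB ν b y / prY ν y)
        = ∑ a, ∑ b, jAB ν a b * Real.log (jAB ν a b / (prA ν a * prB ν b)) :=
  stmt_12_general ν hν hAB hY hci hBY
end
end
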